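/- Consider the almost paracontact metric Walker structure on ℝ³ with ξ₂ ≡ −1, ξ₃ ≡ 0 and an arbitrary smooth function ξ₁ : ℝ³ → ℝ (so ξ = ξ₁∂x − ∂y, η = −dy + ξ₁ dz, φ∂x = ∂x, φ∂y = ξ₁∂x, φ∂z = f∂x − ξ₁∂y − ∂z). Then the structure lies strictly in the basic class G₁₂ — i.e. F is nonzero at every point and F(X,Y,Z) = η(X)(η(Y)F(ξ,ξ,Z) − η(Z)F(ξ,ξ,Y)) for all vector fields X,Y,Z — if and only if (ξ₁)_x ≡ 0, (ξ₁)_y vanishes nowhere, and 2ξ₁(ξ₁)_y + 2(ξ₁)_z + ξ₁ f_x − f_y ≡ 0 on ℝ³ (Theorem 4.5(v)). -/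

import Mathlib

open Real

/-- Points of the Walker manifold `M = ℝ³` with coordinates `(x,y,z)`. -/
abbrev Pt : Type := ℝ × ℝ × ℝ

/-- Vector fields on `ℝ³`, given by their components in the frame `∂x, ∂y, ∂z`. -/
abbrev VF : Type := Pt → Pt

/-- Partial derivative ∂/∂x. -/
noncomputable def pdx (F : Pt → ℝ) (p : Pt) : ℝ := fderiv ℝ F p ((1:ℝ), (0:ℝ), (0:ℝ))

/-- Partial derivative ∂/∂y. -/
noncomputable def pdy (F : Pt → ℝ) (p : Pt) : ℝ := fderiv ℝ F p ((0:ℝ), (1:ℝ), (0:ℝ))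

/-- Partial derivative ∂/∂z. -/
noncomputable def pdz (F : Pt → ℝ) (p : Pt) : ℝ := fderiv ℝ F p ((0:ℝ), (0:ℝ), (1:ℝ))

/-- Directional derivative of a scalar function along a vector field. -/
noncomputable def dd (X : VF) (F : Pt → ℝ) (p : Pt) : ℝ := fderiv ℝ F p (X p)

/-- Components of a tangent vector. -/
def c1 (v : Pt) : ℝ := v.1
def c2 (v : Pt) : ℝ := v.2.1
def c3 (v : Pt) : ℝ := v.2.2

/-- The coordinate vector fields `∂x, ∂y, ∂z`. -/
noncomputable def E : Fin 3 → VF :=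
  ![fun _ => ((1:ℝ), (0:ℝ), (0:ℝ)), fun _ => ((0:ℝ), (1:ℝ), (0:ℝ)),
    fun _ => ((0:ℝ), (0:ℝ), (1:ℝ))]

/-- The Walker metric with `ε = 1`: `g(∂x,∂z) = g(∂z,∂x) = 1`, `g(∂y,∂y) = 1`,
`g(∂z,∂z) = f`, all other components zero. -/
noncomputable def gm (f : Pt → ℝ) (X Y : VF) (p : Pt) : ℝ :=
  c1 (X p) * c3 (Y p) + c3 (X p) * c1 (Y p) + c2 (X p) * c2 (Y p)
    + f p * c3 (X p) * c3 (Y p)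

/-- The Levi-Civita connection of the Walker metric:
`∇_{∂x}∂z = ∇_{∂z}∂x = (1/2) f_x ∂x`, `∇_{∂y}∂z = ∇_{∂z}∂y = (1/2) f_y ∂x`,
`∇_{∂z}∂z = (1/2)(f f_x + f_z) ∂x - (1/2) f_y ∂y - (1/2) f_x ∂z`, all other covariant
derivatives of coordinate fields zero, extended by `C^∞`-linearity below and the
Leibniz rule above. -/
noncomputable def cov (f : Pt → ℝ) (X Y : VF) : VF := fun p =>
  ( dd X (fun q => c1 (Y q)) p
      + (1/2) * pdx f p * (c1 (X p) * c3 (Y p) + c3 (X p) * c1 (Y p))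
      + (1/2) * pdy f p * (c2 (X p) * c3 (Y p) + c3 (X p) * c2 (Y p))
      + (1/2) * (f p * pdx f p + pdz f p) * (c3 (X p) * c3 (Y p)),
    dd X (fun q => c2 (Y q)) p - (1/2) * pdy f p * (c3 (X p) * c3 (Y p)),
    dd X (fun q => c3 (Y q)) p - (1/2) * pdx f p * (c3 (X p) * c3 (Y p)) )

/-- Lie bracket of vector fields on `ℝ³`. -/
noncomputable def brk (X Y : VF) : VF := fun p =>
  ( dd X (fun q => c1 (Y q)) p - dd Y (fun q => c1 (X q)) p,
    dd X (fun q => c2 (Y q)) p - dd Y (fun q => c2 (X q)) p,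
    dd X (fun q => c3 (Y q)) p - dd Y (fun q => c3 (X q)) p )

/-- The `(1,1)`-tensor `φ` of the almost paracontact metric Walker structure:
`φ∂x = -ξ₂∂x + ξ₃∂y`, `φ∂y = (ξ₁ + fξ₃)∂x - ξ₃∂z`, `φ∂z = -fξ₂∂x - ξ₁∂y + ξ₂∂z`. -/
noncomputable def phiV (f ξ₁ ξ₂ ξ₃ : Pt → ℝ) (X : VF) : VF := fun p =>
  ( -ξ₂ p * c1 (X p) + (ξ₁ p + f p * ξ₃ p) * c2 (X p) - f p * ξ₂ p * c3 (X p),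
    ξ₃ p * c1 (X p) - ξ₁ p * c3 (X p),
    -ξ₃ p * c2 (X p) + ξ₂ p * c3 (X p) )

/-- The 1-form `η = ξ₃ dx + ξ₂ dy + (ξ₁ + fξ₃) dz`. -/
noncomputable def etaV (f ξ₁ ξ₂ ξ₃ : Pt → ℝ) (X : VF) (p : Pt) : ℝ :=
  ξ₃ p * c1 (X p) + ξ₂ p * c2 (X p) + (ξ₁ p + f p * ξ₃ p) * c3 (X p)

/-- The structure tensor `F(X,Y,Z) = g((∇_X φ)Y, Z)`, `(∇_X φ)Y = ∇_X(φY) - φ(∇_X Y)`. -/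
noncomputable def Ften (f ξ₁ ξ₂ ξ₃ : Pt → ℝ) (X Y Z : VF) (p : Pt) : ℝ :=
  gm f (fun q => cov f X (phiV f ξ₁ ξ₂ ξ₃ Y) q - phiV f ξ₁ ξ₂ ξ₃ (cov f X Y) q) Z p

/-- The fundamental 2-form `Φ(X,Y) = g(φX, Y)`. -/
noncomputable def Phi2 (f ξ₁ ξ₂ ξ₃ : Pt → ℝ) (X Y : VF) : Pt → ℝ :=
  gm f (phiV f ξ₁ ξ₂ ξ₃ X) Y

/-- `dη(∂i,∂j) = (1/2)(∂i(η(∂j)) - ∂j(η(∂i)))` on coordinate fields. -/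
noncomputable def deta (f ξ₁ ξ₂ ξ₃ : Pt → ℝ) (i j : Fin 3) (p : Pt) : ℝ :=
  (1/2) * (dd (E i) (etaV f ξ₁ ξ₂ ξ₃ (E j)) p - dd (E j) (etaV f ξ₁ ξ₂ ξ₃ (E i)) p)

/-- `dη(X,Y) = (1/2)(X(η(Y)) - Y(η(X)) - η([X,Y]))` on general vector fields. -/
noncomputable def detaB (f ξ₁ ξ₂ ξ₃ : Pt → ℝ) (X Y : VF) (p : Pt) : ℝ :=
  (1/2) * (dd X (etaV f ξ₁ ξ₂ ξ₃ Y) p - dd Y (etaV f ξ₁ ξ₂ ξ₃ X) p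
    - etaV f ξ₁ ξ₂ ξ₃ (brk X Y) p)

/-- The Nijenhuis tensor `N(X,Y) = φ²[X,Y] + [φX,φY] - φ[φX,Y] - φ[X,φY]`. -/
noncomputable def nij (f ξ₁ ξ₂ ξ₃ : Pt → ℝ) (X Y : VF) : VF := fun p =>
  phiV f ξ₁ ξ₂ ξ₃ (phiV f ξ₁ ξ₂ ξ₃ (brk X Y)) p
    + brk (phiV f ξ₁ ξ₂ ξ₃ X) (phiV f ξ₁ ξ₂ ξ₃ Y) p
    - phiV f ξ₁ ξ₂ ξ₃ (brk (phiV f ξ₁ ξ₂ ξ₃ X) Y) p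
    - phiV f ξ₁ ξ₂ ξ₃ (brk X (phiV f ξ₁ ξ₂ ξ₃ Y)) p

/-- The curvature tensor, with the paper's sign convention
`R(X,Y)Z = ∇_{[X,Y]}Z - ∇_X∇_Y Z + ∇_Y∇_X Z`. -/
noncomputable def Rop (f : Pt → ℝ) (X Y Z : VF) : VF := fun p =>
  cov f (brk X Y) Z p - cov f X (cov f Y Z) p + cov f Y (cov f X Z) p

/-- Second partial derivatives of `f`. -/
noncomputable def fxx (f : Pt → ℝ) : Pt → ℝ := pdx (pdx f)
noncomputable def fxy (f : Pt → ℝ) : Pt → ℝ := pdy (pdx f)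
noncomputable def fyy (f : Pt → ℝ) : Pt → ℝ := pdy (pdy f)

/-- The Ricci tensor of the Walker metric: `ρ(∂x,∂z) = ρ(∂z,∂x) = (1/2) f_xx`,
`ρ(∂y,∂z) = ρ(∂z,∂y) = (1/2) f_xy`, `ρ(∂z,∂z) = (1/2)(f f_xx - f_yy)`, all other
components zero, extended tensorially. -/
noncomputable def rhoT (f : Pt → ℝ) (X Y : VF) (p : Pt) : ℝ :=
  (1/2) * fxx f p * (c1 (X p) * c3 (Y p) + c3 (X p) * c1 (Y p))
    + (1/2) * fxy f p * (c2 (X p) * c3 (Y p) + c3 (X p) * c2 (Y p))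
    + (1/2) * (f p * fxx f p - fyy f p) * (c3 (X p) * c3 (Y p))

/-- The Ricci operator: `Q∂x = (1/2)f_xx ∂x`, `Q∂y = (1/2)f_xy ∂x`,
`Q∂z = -(1/2)f_yy ∂x + (1/2)f_xy ∂y + (1/2)f_xx ∂z`. -/
noncomputable def Qop (f : Pt → ℝ) (X : VF) : VF := fun p =>
  ( (1/2) * fxx f p * c1 (X p) + (1/2) * fxy f p * c2 (X p) - (1/2) * fyy f p * c3 (X p),
    (1/2) * fxy f p * c3 (X p),
    (1/2) * fxx f p * c3 (X p) )

/-- `dΦ(∂x,∂y,∂z) = ∂x(Φ(∂y,∂z)) - ∂y(Φ(∂x,∂z)) + ∂z(Φ(∂x,∂y))`. -/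
noncomputable def dPhi (f ξ₁ ξ₂ ξ₃ : Pt → ℝ) (p : Pt) : ℝ :=
  pdx (Phi2 f ξ₁ ξ₂ ξ₃ (E 1) (E 2)) p - pdy (Phi2 f ξ₁ ξ₂ ξ₃ (E 0) (E 2)) p
    + pdz (Phi2 f ξ₁ ξ₂ ξ₃ (E 0) (E 1)) p

/-- `(η∧Φ)(∂x,∂y,∂z) = η(∂x)Φ(∂y,∂z) - η(∂y)Φ(∂x,∂z) + η(∂z)Φ(∂x,∂y)`. -/
noncomputable def etaWedgePhi (f ξ₁ ξ₂ ξ₃ : Pt → ℝ) (p : Pt) : ℝ :=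
  etaV f ξ₁ ξ₂ ξ₃ (E 0) p * Phi2 f ξ₁ ξ₂ ξ₃ (E 1) (E 2) p
    - etaV f ξ₁ ξ₂ ξ₃ (E 1) p * Phi2 f ξ₁ ξ₂ ξ₃ (E 0) (E 2) p
    + etaV f ξ₁ ξ₂ ξ₃ (E 2) p * Phi2 f ξ₁ ξ₂ ξ₃ (E 0) (E 1) p

/-- The constant function `0`. -/
noncomputable def zeroF : Pt → ℝ := fun _ => 0
/-- The constant function `1`. -/
noncomputable def oneF : Pt → ℝ := fun _ => 1
/-- The constant function `-1`. -/
noncomputable def negOneF : Pt → ℝ := fun _ => -1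

/-- The Reeb vector field `ξ = ξ₁∂x - ∂y`. -/
noncomputable def xiVm (ξ₁ : Pt → ℝ) : VF := fun p => (ξ₁ p, (-1:ℝ), (0:ℝ))

/-! With `ξ₂ ≡ -1`, `ξ₃ ≡ 0` the structure tensor factors as `F(X,Y,Z) = ω(X) (Y₂Z₃ - Y₃Z₂)`,
where `ω = Fform f ξ₁` is a 1-form built from the first derivatives of `ξ₁` and `f`. As `η(ξ) = 1`,
the right-hand side of the `G₁₂` identity is `η(X) ω(ξ) (Y₂Z₃ - Y₃Z₂)`, so the identity says exactly
`ω = ω(ξ) η`; its `∂x`- and `∂z`-components are `(ξ₁)_x = 0` and the first-order equation for `ξ₁`.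
Then `ω = -(ξ₁)_y η`, so `F` vanishes at a point iff `(ξ₁)_y` does. -/

section DirectionalDerivative

variable (X : VF)

lemma dd_eq (F : Pt → ℝ) (p : Pt) :
    dd X F p = c1 (X p) * pdx F p + c2 (X p) * pdy F p + c3 (X p) * pdz F p := by
  have hX : X p = c1 (X p) • ((1:ℝ), (0:ℝ), (0:ℝ)) + c2 (X p) • ((0:ℝ), (1:ℝ), (0:ℝ))
      + c3 (X p) • ((0:ℝ), (0:ℝ), (1:ℝ)) := by
    simp [c1, c2, c3]
  rw [dd]
  conv_lhs => rw [hX]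
  simp only [map_add, map_smul, smul_eq_mul, pdx, pdy, pdz]

lemma dd_add {F G : Pt → ℝ} {p : Pt} (hF : DifferentiableAt ℝ F p)
    (hG : DifferentiableAt ℝ G p) :
    dd X (fun q => F q + G q) p = dd X F p + dd X G p := by
  simp only [dd, fderiv_fun_add hF hG, add_apply]

lemma dd_mul {F G : Pt → ℝ} {p : Pt} (hF : DifferentiableAt ℝ F p)
    (hG : DifferentiableAt ℝ G p) :
    dd X (fun q => F q * G q) p = dd X F p * G p + F p * dd X G p := by
  simp only [dd, fderiv_fun_mul hF hG, add_apply, smul_apply, smul_eq_mul]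
  ring

lemma dd_neg (F : Pt → ℝ) (p : Pt) : dd X (fun q => -F q) p = -dd X F p := by
  simp only [dd, fderiv_fun_neg, neg_apply]

end DirectionalDerivative

lemma phiV_negOneF_zeroF (f ξ₁ : Pt → ℝ) (Y : VF) :
    phiV f ξ₁ negOneF zeroF Y =
      fun q => (c1 (Y q) + ξ₁ q * c2 (Y q) + f q * c3 (Y q), -(ξ₁ q * c3 (Y q)), -c3 (Y q)) := by
  funext q
  simp only [phiV, negOneF, zeroF, Prod.mk.injEq]
  refine ⟨?_, ?_, ?_⟩ <;> ring

noncomputable def Fform (f ξ₁ : Pt → ℝ) (p v : Pt) : ℝ :=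
  c1 v * pdx ξ₁ p + c2 v * pdy ξ₁ p + c3 v * (pdz ξ₁ p + (ξ₁ p * pdx f p - pdy f p) / 2)

lemma Ften_negOneF_zeroF (f ξ₁ : Pt → ℝ) (X Y Z : VF) (p : Pt) (hf : DifferentiableAt ℝ f p)
    (hξ : DifferentiableAt ℝ ξ₁ p) (hY : DifferentiableAt ℝ Y p) :
    Ften f ξ₁ negOneF zeroF X Y Z p =
      Fform f ξ₁ p (X p) * (c2 (Y p) * c3 (Z p) - c3 (Y p) * c2 (Z p)) := by
  -- `fun_prop` cannot see through the abbreviation `VF`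
  change Pt → Pt at Y
  simp only [Ften, gm, cov, phiV_negOneF_zeroF, c1, c2, c3, Prod.fst_sub, Prod.snd_sub]
  simp (disch := fun_prop) only [dd_add, dd_mul, dd_neg]
  rw [dd_eq X ξ₁, dd_eq X f]
  simp only [Fform, c1, c2, c3]
  ring

lemma etaV_negOneF_zeroF (f ξ₁ : Pt → ℝ) (X : VF) (p : Pt) :
    etaV f ξ₁ negOneF zeroF X p = ξ₁ p * c3 (X p) - c2 (X p) := by
  simp only [etaV, negOneF, zeroF]
  ring

lemma differentiableAt_E (i : Fin 3) (p : Pt) : DifferentiableAt ℝ (E i) p := by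
  fin_cases i <;> exact differentiableAt_const _

lemma G12_identity_iff (f ξ₁ : Pt → ℝ) (hf : Differentiable ℝ f) (hξ : Differentiable ℝ ξ₁) :
    (∀ X Y Z : VF, ContDiff ℝ (⊤ : ℕ∞) X → ContDiff ℝ (⊤ : ℕ∞) Y →
        ContDiff ℝ (⊤ : ℕ∞) Z → ∀ p : Pt,
          Ften f ξ₁ negOneF zeroF X Y Z p =
            etaV f ξ₁ negOneF zeroF X p *
              (etaV f ξ₁ negOneF zeroF Y p *
                  Ften f ξ₁ negOneF zeroF (xiVm ξ₁) (xiVm ξ₁) Z p -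
                etaV f ξ₁ negOneF zeroF Z p *
                  Ften f ξ₁ negOneF zeroF (xiVm ξ₁) (xiVm ξ₁) Y p)) ↔
      ∀ p v : Pt, Fform f ξ₁ p v = (ξ₁ p * c3 v - c2 v) * Fform f ξ₁ p (xiVm ξ₁ p) := by
  have hxi (p : Pt) : DifferentiableAt ℝ (xiVm ξ₁) p :=
    (hξ p).prodMk (differentiableAt_const _)
  have hF (X Y Z : VF) (p : Pt) (hY : DifferentiableAt ℝ Y p) :=
    Ften_negOneF_zeroF f ξ₁ X Y Z p (hf p) (hξ p) hY
  constructor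
  · intro h p v
    have hv := h (fun _ => v) (fun _ => (0, 1, 0)) (fun _ => (0, 0, 1))
      contDiff_const contDiff_const contDiff_const p
    rw [hF _ _ _ p (differentiableAt_const _), hF _ _ _ p (hxi p), hF _ _ _ p (hxi p)] at hv
    simp only [etaV_negOneF_zeroF, xiVm, c2, c3] at hv ⊢
    linear_combination hv
  · intro h X Y Z _ hY _ p
    rw [hF _ _ _ p (hY.differentiable (by simp) p), hF _ _ _ p (hxi p), hF _ _ _ p (hxi p),
      h p (X p)]
    simp only [etaV_negOneF_zeroF, xiVm, c2, c3]
    ring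

lemma Fform_eq_eta_mul_iff (f ξ₁ : Pt → ℝ) (p : Pt) :
    (∀ v : Pt, Fform f ξ₁ p v = (ξ₁ p * c3 v - c2 v) * Fform f ξ₁ p (xiVm ξ₁ p)) ↔
      pdx ξ₁ p = 0 ∧ 2 * ξ₁ p * pdy ξ₁ p + 2 * pdz ξ₁ p + ξ₁ p * pdx f p - pdy f p = 0 := by
  simp only [Fform, xiVm, c1, c2, c3]
  constructor
  · intro h
    have hx := h (1, 0, 0)
    have hz := h (0, 0, 1)
    simp only at hx hz
    refine ⟨by linear_combination hx, ?_⟩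
    linear_combination 2 * hz + 2 * ξ₁ p ^ 2 * hx
  · rintro ⟨hx, hc⟩ v
    linear_combination (v.1 + v.2.1 * ξ₁ p - ξ₁ p ^ 2 * v.2.2) * hx + v.2.2 / 2 * hc

lemma exists_Ften_E_ne_zero_iff {f ξ₁ : Pt → ℝ} {p : Pt} (hf : DifferentiableAt ℝ f p)
    (hξ : DifferentiableAt ℝ ξ₁ p) (hx : pdx ξ₁ p = 0)
    (hc : 2 * ξ₁ p * pdy ξ₁ p + 2 * pdz ξ₁ p + ξ₁ p * pdx f p - pdy f p = 0) :
    (∃ i j k : Fin 3, Ften f ξ₁ negOneF zeroF (E i) (E j) (E k) p ≠ 0) ↔ pdy ξ₁ p ≠ 0 := by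
  constructor
  · rintro ⟨i, j, k, hijk⟩ hy
    have hform := (Fform_eq_eta_mul_iff f ξ₁ p).2 ⟨hx, hc⟩ (E i p)
    rw [Ften_negOneF_zeroF f ξ₁ _ _ _ p hf hξ (differentiableAt_E j p), hform] at hijk
    simp [Fform, xiVm, c1, c2, c3, hx, hy] at hijk
  · intro hy
    refine ⟨1, 1, 2, ?_⟩
    rw [Ften_negOneF_zeroF f ξ₁ _ _ _ p hf hξ (differentiableAt_E 1 p)]
    simpa [E, Fform, c1, c2, c3] using hy

/-- Theorem 4.5(v): the structure with `ξ₂ ≡ -1`, `ξ₃ ≡ 0` lies strictly in the class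
`G₁₂` iff `(ξ₁)_x ≡ 0`, `(ξ₁)_y` vanishes nowhere and
`2ξ₁(ξ₁)_y + 2(ξ₁)_z + ξ₁ f_x - f_y ≡ 0`. -/
theorem G12_iff_neg (f ξ₁ : Pt → ℝ)
    (hf : ContDiff ℝ (⊤ : ℕ∞) f) (h1 : ContDiff ℝ (⊤ : ℕ∞) ξ₁) :
    ((∀ p : Pt, ∃ i j k : Fin 3, Ften f ξ₁ negOneF zeroF (E i) (E j) (E k) p ≠ 0) ∧
      (∀ X Y Z : VF, ContDiff ℝ (⊤ : ℕ∞) X → ContDiff ℝ (⊤ : ℕ∞) Y →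
        ContDiff ℝ (⊤ : ℕ∞) Z → ∀ p : Pt,
          Ften f ξ₁ negOneF zeroF X Y Z p =
            etaV f ξ₁ negOneF zeroF X p *
              (etaV f ξ₁ negOneF zeroF Y p *
                  Ften f ξ₁ negOneF zeroF (xiVm ξ₁) (xiVm ξ₁) Z p -
                etaV f ξ₁ negOneF zeroF Z p *
                  Ften f ξ₁ negOneF zeroF (xiVm ξ₁) (xiVm ξ₁) Y p))) ↔
    ((∀ p : Pt, pdx ξ₁ p = 0) ∧ (∀ p : Pt, pdy ξ₁ p ≠ 0) ∧
      (∀ p : Pt, 2 * ξ₁ p * pdy ξ₁ p + 2 * pdz ξ₁ p + ξ₁ p * pdx f p - pdy f p = 0)) := by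
  have hfd : Differentiable ℝ f := hf.differentiable (by simp)
  have hξd : Differentiable ℝ ξ₁ := h1.differentiable (by simp)
  rw [G12_identity_iff f ξ₁ hfd hξd]
  simp only [Fform_eq_eta_mul_iff]
  constructor
  · rintro ⟨hnz, hform⟩
    refine ⟨fun p => (hform p).1, fun p => ?_, fun p => (hform p).2⟩
    exact (exists_Ften_E_ne_zero_iff (hfd p) (hξd p) (hform p).1 (hform p).2).1 (hnz p)
  · rintro ⟨hx, hy, hc⟩
    exact ⟨fun p => (exists_Ften_E_ne_zero_iff (hfd p) (hξd p) (hx p) (hc p)).2 (hy p),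
      fun p => ⟨hx p, hc p⟩⟩
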